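/- arXiv:2108.10785 — 2 statements merged into one kernel-verified Lean document; each statement's English description precedes it below -/
import Mathlib

section
/- Let 0 < ι ≤ π/2 and let U be a random variable uniformly distributed on [0, 2π). Define Φ = arcsin(sin ι · sin U). Then the law of Φ is absolutely continuous with respect to Lebesgue measure, with density f_Φ(φ) = √2 · cos φ / (π · √(cos(2φ) − cos(2ι))) for φ ∈ (−ι, ι) and f_Φ(φ) = 0 for |φ| ≥ ι. -/
open Real MeasureTheory Set
open scoped ENNReal

/-! The map `u ↦ arcsin (sin ι sin u)` is `2π`-periodic and symmetric about `π / 2`, so it pushes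
the uniform law on `[0, 2π)` forward to twice the image of `(2π)⁻¹ • volume` on the half-orbit
`(-π/2, π/2)`. There it is a bijection onto `(-ι, ι)` with inverse `φ ↦ arcsin (sin φ / sin ι)`,
and the change of variables formula gives the density `|d/dφ arcsin (sin φ / sin ι)| =
cos φ / √(sin² ι - sin² φ)`, which is `√2 cos φ / √(cos 2φ - cos 2ι)`. -/

theorem map_restrict_image_eq_withDensity {s : Set ℝ} {f f' g : ℝ → ℝ} (hs : MeasurableSet s)
    (hf' : ∀ x ∈ s, HasDerivWithinAt f (f' x) s x) (hgf : LeftInvOn g f s)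
    (hf : Measurable f) (hg : Measurable g) :
    Measure.map g (volume.restrict (f '' s)) =
      (volume.restrict s).withDensity fun x => ENNReal.ofReal |f' x| := by
  have hcov := map_withDensity_abs_det_fderiv_eq_addHaar volume hs.nullMeasurableSet
    (fun x hx => (hf' x hx).hasFDerivWithinAt) hgf.injOn
  simp only [ContinuousLinearMap.det_toSpanSingleton] at hcov
  rw [← hcov, Measure.map_map hg hf]
  refine (Measure.map_congr ?_).trans Measure.map_id
  refine (withDensity_absolutelyContinuous _ _).ae_le ?_
  filter_upwards [ae_restrict_mem hs] with x hx using hgf hx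

theorem Function.Periodic.map_restrict_Ioc_add_eq {α : Type*} [MeasurableSpace α] {g : ℝ → α}
    {T : ℝ} (hg : Function.Periodic g T) (hgm : Measurable g) (hT : 0 < T) (a b : ℝ) :
    Measure.map g (volume.restrict (Ioc a (a + T))) =
      Measure.map g (volume.restrict (Ioc b (b + T))) := by
  have : Fact (0 < T) := ⟨hT⟩
  have hlift : Measurable hg.lift := measurable_from_quotient.2 hgm
  have hg_eq : g = hg.lift ∘ ((↑) : ℝ → AddCircle T) := funext fun x => (hg.lift_coe x).symm
  rw [hg_eq, ← Measure.map_map hlift (AddCircle.measurePreserving_mk T a).measurable,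
    ← Measure.map_map hlift (AddCircle.measurePreserving_mk T b).measurable,
    (AddCircle.measurePreserving_mk T a).map_eq, (AddCircle.measurePreserving_mk T b).map_eq]

theorem MeasureTheory.MeasurePreserving.map_comp_restrict_preimage {α β γ : Type*}
    [MeasurableSpace α] [MeasurableSpace β] [MeasurableSpace γ] {μ : Measure α} {ν : Measure β}
    {e : α → β} {g : β → γ} (he : MeasurePreserving e μ ν) (hemb : MeasurableEmbedding e)
    (hg : Measurable g) (s : Set β) :
    Measure.map (g ∘ e) (μ.restrict (e ⁻¹' s)) = Measure.map g (ν.restrict s) := by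
  rw [← Measure.map_map hg he.measurable, (he.restrict_preimage_emb hemb s).map_eq]

theorem map_restrict_Ico_zero_two_pi_of_periodic {α : Type*} [MeasurableSpace α] {g : ℝ → α}
    (hgm : Measurable g) (hper : Function.Periodic g (2 * π)) (hsym : ∀ u, g (π - u) = g u) :
    Measure.map g (volume.restrict (Ico 0 (2 * π))) =
      (2 : ℝ≥0∞) • Measure.map g (volume.restrict (Ioo (-(π / 2)) (π / 2))) := by
  have hreflect : Measure.map g (volume.restrict (Ioc (π / 2) (3 * π / 2))) =
      Measure.map g (volume.restrict (Ioo (-(π / 2)) (π / 2))) := by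
    have h := (Measure.measurePreserving_sub_left volume π).map_comp_restrict_preimage
      (Homeomorph.subLeft π).measurableEmbedding hgm (Ioc (π / 2) (3 * π / 2))
    rwa [preimage_const_sub_Ioc, show π - 3 * π / 2 = -(π / 2) by ring,
      show π - π / 2 = π / 2 by ring, ← Measure.restrict_congr_set Ioo_ae_eq_Ico,
      show g ∘ (fun u => π - u) = g from funext hsym, eq_comm] at h
  calc Measure.map g (volume.restrict (Ico 0 (2 * π)))
      = Measure.map g (volume.restrict (Ioc 0 (0 + 2 * π))) := by
        rw [zero_add, Measure.restrict_congr_set Ico_ae_eq_Ioc]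
    _ = Measure.map g (volume.restrict (Ioc (-(π / 2)) (-(π / 2) + 2 * π))) :=
        hper.map_restrict_Ioc_add_eq hgm two_pi_pos _ _
    _ = Measure.map g (volume.restrict (Ioc (-(π / 2)) (π / 2))) +
          Measure.map g (volume.restrict (Ioc (π / 2) (3 * π / 2))) := by
        rw [← Measure.map_add _ _ hgm, ← Measure.restrict_union (Ioc_disjoint_Ioc_of_le le_rfl)
          measurableSet_Ioc, Ioc_union_Ioc_eq_Ioc (by linarith [pi_pos]) (by linarith [pi_pos])]
        congr 3
        ring
    _ = _ := by
        rw [hreflect, ← Measure.restrict_congr_set Ioo_ae_eq_Ioc, two_smul]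

theorem abs_sin_lt_sin_iff {x y : ℝ} (hx : |x| ≤ π / 2) (hy0 : 0 ≤ y) (hy : y ≤ π / 2) :
    |sin x| < sin y ↔ |x| < y := by
  rw [abs_sin_eq_sin_abs_of_abs_le_pi (by linarith [pi_pos])]
  exact strictMonoOn_sin.lt_iff_lt ⟨by linarith [abs_nonneg x], hx⟩ ⟨by linarith, hy⟩

theorem abs_sin_lt_one_of_mem_Ioo {u : ℝ} (hu : u ∈ Ioo (-(π / 2)) (π / 2)) : |sin u| < 1 := by
  simpa using (abs_sin_lt_sin_iff (abs_lt.2 hu).le pi_div_two_pos.le le_rfl).2 (abs_lt.2 hu)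

theorem sin_pos_of_pos_of_le_pi_div_two {x : ℝ} (hx0 : 0 < x) (hx : x ≤ π / 2) : 0 < sin x :=
  sin_pos_of_pos_of_lt_pi hx0 (by linarith [pi_pos])

theorem cos_two_mul_sub_cos_two_mul (x y : ℝ) :
    cos (2 * x) - cos (2 * y) = 2 * (sin y ^ 2 - sin x ^ 2) := by
  rw [cos_two_mul, cos_two_mul, cos_sq', cos_sq']
  ring

noncomputable def latitude (ι u : ℝ) : ℝ := arcsin (sin ι * sin u)

noncomputable def argLatitude (ι φ : ℝ) : ℝ := arcsin (sin φ / sin ι)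

section Latitude

variable {ι : ℝ}

theorem measurable_latitude (ι : ℝ) : Measurable (latitude ι) := by
  unfold latitude
  fun_prop

theorem measurable_argLatitude (ι : ℝ) : Measurable (argLatitude ι) := by
  unfold argLatitude
  fun_prop

theorem abs_sin_div_sin_lt_one (hι0 : 0 < ι) (hι : ι ≤ π / 2) {φ : ℝ} (hφ : φ ∈ Ioo (-ι) ι) :
    |sin φ / sin ι| < 1 := by
  have hsinι := sin_pos_of_pos_of_le_pi_div_two hι0 hι
  rw [abs_div, abs_of_pos hsinι, div_lt_one hsinι]
  exact (abs_sin_lt_sin_iff (by linarith [abs_lt.2 hφ]) hι0.le hι).2 (abs_lt.2 hφ)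

theorem mapsTo_latitude (hι0 : 0 < ι) (hι : ι ≤ π / 2) :
    MapsTo (latitude ι) (Ioo (-(π / 2)) (π / 2)) (Ioo (-ι) ι) := by
  intro u hu
  have hsinι := sin_pos_of_pos_of_le_pi_div_two hι0 hι
  have hlt : |sin ι * sin u| < sin ι := by
    rw [abs_mul, abs_of_pos hsinι]
    exact mul_lt_of_lt_one_right hsinι (abs_sin_lt_one_of_mem_Ioo hu)
  obtain ⟨hl, hr⟩ := abs_lt.1 (hlt.trans_le (sin_le_one ι))
  rw [mem_Ioo, ← abs_lt]
  refine (abs_sin_lt_sin_iff (abs_le.2 ⟨neg_pi_div_two_le_arcsin _, arcsin_le_pi_div_two _⟩)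
    hι0.le hι).1 ?_
  rwa [sin_arcsin hl.le hr.le]

theorem mapsTo_argLatitude (hι0 : 0 < ι) (hι : ι ≤ π / 2) :
    MapsTo (argLatitude ι) (Ioo (-ι) ι) (Ioo (-(π / 2)) (π / 2)) := by
  intro φ hφ
  obtain ⟨hl, hr⟩ := abs_lt.1 (abs_sin_div_sin_lt_one hι0 hι hφ)
  exact ⟨neg_pi_div_two_lt_arcsin.2 hl, arcsin_lt_pi_div_two.2 hr⟩

theorem leftInvOn_latitude_argLatitude (hι0 : 0 < ι) (hι : ι ≤ π / 2) :
    LeftInvOn (latitude ι) (argLatitude ι) (Ioo (-ι) ι) := by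
  intro φ hφ
  obtain ⟨hl, hr⟩ := abs_lt.1 (abs_sin_div_sin_lt_one hι0 hι hφ)
  rw [latitude, argLatitude, sin_arcsin hl.le hr.le,
    mul_div_cancel₀ _ (sin_pos_of_pos_of_le_pi_div_two hι0 hι).ne',
    arcsin_sin (by linarith [hφ.1]) (by linarith [hφ.2])]

theorem leftInvOn_argLatitude_latitude (hι0 : 0 < ι) (hι : ι ≤ π / 2) :
    LeftInvOn (argLatitude ι) (latitude ι) (Ioo (-(π / 2)) (π / 2)) := by
  intro u hu
  have hle : |sin ι * sin u| ≤ 1 := by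
    rw [abs_mul]
    exact mul_le_one₀ (abs_sin_le_one ι) (abs_nonneg _) (abs_sin_le_one u)
  obtain ⟨hl, hr⟩ := abs_le.1 hle
  rw [latitude, argLatitude, sin_arcsin hl hr,
    mul_div_cancel_left₀ _ (sin_pos_of_pos_of_le_pi_div_two hι0 hι).ne', arcsin_sin hu.1.le hu.2.le]

theorem image_argLatitude (hι0 : 0 < ι) (hι : ι ≤ π / 2) :
    argLatitude ι '' Ioo (-ι) ι = Ioo (-(π / 2)) (π / 2) :=
  (mapsTo_argLatitude hι0 hι).image_subset.antisymm
    (RightInvOn.surjOn (leftInvOn_argLatitude_latitude hι0 hι) (mapsTo_latitude hι0 hι))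

theorem hasDerivAt_argLatitude (hι0 : 0 < ι) (hι : ι ≤ π / 2) {φ : ℝ} (hφ : φ ∈ Ioo (-ι) ι) :
    HasDerivAt (argLatitude ι) (√2 * cos φ / √(cos (2 * φ) - cos (2 * ι))) φ := by
  have hsinι := sin_pos_of_pos_of_le_pi_div_two hι0 hι
  have hlt := abs_sin_div_sin_lt_one hι0 hι hφ
  obtain ⟨hl, hr⟩ := abs_lt.1 hlt
  have h := (hasDerivAt_arcsin hl.ne' hr.ne).comp φ ((hasDerivAt_sin φ).div_const (sin ι))
  have hpos : 0 < √(1 - (sin φ / sin ι) ^ 2) := sqrt_pos.2 (by nlinarith)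
  have hsqrt : √(cos (2 * φ) - cos (2 * ι)) = √2 * (sin ι * √(1 - (sin φ / sin ι) ^ 2)) := by
    have hsq : cos (2 * φ) - cos (2 * ι) = 2 * (sin ι ^ 2 * (1 - (sin φ / sin ι) ^ 2)) := by
      rw [cos_two_mul_sub_cos_two_mul]
      field_simp
    rw [hsq, sqrt_mul zero_le_two, sqrt_mul (sq_nonneg _), sqrt_sq hsinι.le]
  refine h.congr_deriv ?_
  rw [hsqrt]
  field_simp

theorem map_latitude_restrict_Ioo (hι0 : 0 < ι) (hι : ι ≤ π / 2) :
    Measure.map (latitude ι) (volume.restrict (Ioo (-(π / 2)) (π / 2))) =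
      (volume.restrict (Ioo (-ι) ι)).withDensity fun φ =>
        ENNReal.ofReal |√2 * cos φ / √(cos (2 * φ) - cos (2 * ι))| := by
  rw [← image_argLatitude hι0 hι]
  exact map_restrict_image_eq_withDensity measurableSet_Ioo
    (fun φ hφ => (hasDerivAt_argLatitude hι0 hι hφ).hasDerivWithinAt)
    (leftInvOn_latitude_argLatitude hι0 hι) (measurable_argLatitude ι) (measurable_latitude ι)

theorem map_latitude_restrict_Ico (ι : ℝ) :
    Measure.map (latitude ι) (volume.restrict (Ico 0 (2 * π))) =
      (2 : ℝ≥0∞) • Measure.map (latitude ι) (volume.restrict (Ioo (-(π / 2)) (π / 2))) :=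
  map_restrict_Ico_zero_two_pi_of_periodic (measurable_latitude ι)
    (fun u => by rw [latitude, latitude, sin_add_two_pi])
    (fun u => by rw [latitude, latitude, sin_pi_sub])

end Latitude

theorem stmt_0_general {Ω : Type*} [MeasureSpace Ω] (P : Measure Ω)
    (ι : ℝ) (hι0 : 0 < ι) (hι : ι ≤ π / 2)
    (U : Ω → ℝ) (hU : Measurable U)
    (hUlaw : Measure.map U P = (ENNReal.ofReal (2 * π))⁻¹ • volume.restrict (Set.Ico 0 (2 * π))) :
    Measure.map (fun ω => Real.arcsin (Real.sin ι * Real.sin (U ω))) P =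
      volume.withDensity (fun φ =>
        if |φ| < ι then
          ENNReal.ofReal (Real.sqrt 2 * Real.cos φ /
            (π * Real.sqrt (Real.cos (2 * φ) - Real.cos (2 * ι))))
        else 0) := by
  have hscalar : (ENNReal.ofReal (2 * π))⁻¹ * 2 ≠ ∞ :=
    ENNReal.mul_ne_top (ENNReal.inv_ne_top.2 (ENNReal.ofReal_pos.2 two_pi_pos).ne')
      ENNReal.ofNat_ne_top
  calc Measure.map (latitude ι ∘ U) P
      = Measure.map (latitude ι) (Measure.map U P) :=
        (Measure.map_map (measurable_latitude ι) hU).symm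
    _ = ((ENNReal.ofReal (2 * π))⁻¹ * 2) • (volume.restrict (Ioo (-ι) ι)).withDensity fun φ =>
          ENNReal.ofReal |√2 * cos φ / √(cos (2 * φ) - cos (2 * ι))| := by
        rw [hUlaw, Measure.map_smul, map_latitude_restrict_Ico, map_latitude_restrict_Ioo hι0 hι,
          smul_smul]
    _ = _ := by
        rw [← withDensity_smul' _ _ hscalar, ← withDensity_indicator measurableSet_Ioo]
        congr 1
        funext φ
        simp only [indicator_apply, mem_Ioo, ← abs_lt, Pi.smul_apply, smul_eq_mul]
        split_ifs with hφ
        · have hcos : 0 ≤ cos φ := cos_nonneg_of_neg_pi_div_two_le_of_le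
            (by linarith [neg_abs_le φ]) (by linarith [le_abs_self φ])
          rw [← ENNReal.ofReal_inv_of_pos two_pi_pos, ← ENNReal.ofReal_ofNat 2,
            ← ENNReal.ofReal_mul (by positivity), ← ENNReal.ofReal_mul (by positivity),
            abs_of_nonneg (by positivity)]
          congr 1
          field_simp
        · rfl

/-- Latitude distribution of a satellite uniformly distributed along a circular orbit
inclined at angle `ι`: if `U` is uniform on `[0, 2π)` and `Φ = arcsin (sin ι · sin U)`,
then the law of `Φ` has Lebesgue density
`√2 cos φ / (π √(cos 2φ - cos 2ι))` on `(-ι, ι)` and `0` for `|φ| ≥ ι`. -/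
theorem stmt_0 {Ω : Type*} [MeasureSpace Ω] (P : Measure Ω) [IsProbabilityMeasure P]
    (ι : ℝ) (hι0 : 0 < ι) (hι : ι ≤ π / 2)
    (U : Ω → ℝ) (hU : Measurable U)
    (hUlaw : Measure.map U P = (ENNReal.ofReal (2 * π))⁻¹ • volume.restrict (Set.Ico 0 (2 * π))) :
    Measure.map (fun ω => Real.arcsin (Real.sin ι * Real.sin (U ω))) P =
      volume.withDensity (fun φ =>
        if |φ| < ι then
          ENNReal.ofReal (Real.sqrt 2 * Real.cos φ /
            (π * Real.sqrt (Real.cos (2 * φ) - Real.cos (2 * ι))))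
        else 0) :=
  stmt_0_general P ι hι0 hι U hU hUlaw
end

section
/- Let (Ω, ℱ, P) be a probability space carrying nonnegative real random variables G, X, I, R₀ with X > 0 and R₀ > 0 almost surely. Let m ≥ 1 be an integer and suppose G has the gamma distribution with shape m and rate m, and G is independent of the triple (X, I, R₀). Let p₀ > 0, σ² > 0, α > 0 be constants and K ≥ 1 an integer. Then, as an identity in [0, ∞], (1/K) · E[ log₂(1 + p₀ · G · X · R₀^{−α} / (I + σ²)) ] = (1/K) · ∫₀^∞ E[ exp(−S_t·(σ² + I)) · Σ_{k=0}^{m−1} (S_t·(σ² + I))^k / k! ] dt, where S_t = m (2^t − 1) R₀^{α} / (p₀ X). -/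
open Real MeasureTheory ProbabilityTheory Filter Set Topology

/-!
By the layer-cake formula, `E[log₂(1 + SINR)] = ∫₀^∞ P(log₂(1 + SINR) > t) dt`, and the event
`log₂(1 + SINR) > t` is `G > (2^t - 1) R₀^α (I + σ²) / (p₀ X)`. Conditioning on `(X, I, R₀)`,
which is independent of `G`, turns its probability into the expectation of the tail of
`Gamma(m, m)` at that threshold. For integer shape `m` this tail is the Erlang sum
`exp(-x) ∑_{k<m} x^k / k!` at `x = m · threshold`, since that function of `x` is an antiderivative
of minus the `Gamma(m, 1)` density.
-/

noncomputable def erlangTail (m : ℕ) (x : ℝ) : ℝ :=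
  exp (-x) * ∑ k ∈ Finset.range m, x ^ k / (Nat.factorial k)

lemma hasDerivAt_sum_range_pow_div_factorial (n : ℕ) (x : ℝ) :
    HasDerivAt (fun y : ℝ => ∑ k ∈ Finset.range (n + 1), y ^ k / (Nat.factorial k))
      (∑ k ∈ Finset.range n, x ^ k / (Nat.factorial k)) x := by
  induction n with
  | zero => simpa using hasDerivAt_const x (1 : ℝ)
  | succ n ih =>
    simp only [Finset.sum_range_succ _ (n + 1)]
    refine (ih.add ((hasDerivAt_pow (n + 1) x).div_const ((n + 1).factorial : ℝ))).congr_deriv ?_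
    rw [Finset.sum_range_succ, Nat.factorial_succ]
    push_cast
    field_simp

lemma hasDerivAt_erlangTail (n : ℕ) (x : ℝ) :
    HasDerivAt (erlangTail (n + 1)) (-(exp (-x) * (x ^ n / (Nat.factorial n)))) x := by
  refine ((hasDerivAt_neg x).exp.mul (hasDerivAt_sum_range_pow_div_factorial n x)).congr_deriv ?_
  rw [Finset.sum_range_succ]
  ring

lemma tendsto_erlangTail_atTop (m : ℕ) : Tendsto (erlangTail m) atTop (𝓝 0) := by
  have hterm (k : ℕ) : Tendsto (fun x : ℝ => x ^ k * exp (-x) / (Nat.factorial k)) atTop (𝓝 0) := by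
    simpa using (tendsto_pow_mul_exp_neg_atTop_nhds_zero k).div_const _
  convert tendsto_finsetSum (Finset.range m) fun k _ => hterm k using 1
  · ext x
    simp only [erlangTail, Finset.mul_sum]
    congr 1 with k
    ring
  · simp

lemma gammaMeasure_Ioi_eq_erlangTail (n : ℕ) {r s : ℝ} (hr : 0 < r) (hs : 0 ≤ s) :
    gammaMeasure ((n + 1 : ℕ) : ℝ) r (Ioi s) = ENNReal.ofReal (erlangTail (n + 1) (r * s)) := by
  set density : ℝ → ℝ := fun x => r * (exp (-(r * x)) * ((r * x) ^ n / (Nat.factorial n)))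
  have hderiv (x : ℝ) : HasDerivAt (fun y => -erlangTail (n + 1) (r * y)) (density x) x := by
    refine ((hasDerivAt_erlangTail n (r * x)).comp x ((hasDerivAt_id x).const_mul r)).neg
      |>.congr_deriv ?_
    ring
  have hdensity_nonneg (x : ℝ) (hx : x ∈ Ioi s) : 0 ≤ density x := by
    have : 0 ≤ r * x := mul_nonneg hr.le (hs.trans (le_of_lt hx))
    positivity
  have hlim : Tendsto (fun y => -erlangTail (n + 1) (r * y)) atTop (𝓝 0) := by
    simpa using ((tendsto_erlangTail_atTop (n + 1)).comp
      (tendsto_id.const_mul_atTop hr)).neg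
  have hpdf : ∀ x ∈ Ioi s, gammaPDF ((n + 1 : ℕ) : ℝ) r x = ENNReal.ofReal (density x) := by
    intro x hx
    rw [gammaPDF_of_nonneg (hs.trans (le_of_lt hx))]
    congr 1
    rw [Real.rpow_natCast, Nat.cast_succ, add_sub_cancel_right, Real.rpow_natCast,
      Real.Gamma_nat_eq_factorial]
    simp only [density]
    ring
  rw [gammaMeasure, withDensity_apply _ measurableSet_Ioi,
    setLIntegral_congr_fun measurableSet_Ioi hpdf,
    ← ofReal_integral_eq_lintegral_ofReal
      (integrableOn_Ioi_deriv_of_nonneg' (fun x _ => hderiv x) hdensity_nonneg hlim)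
      ((ae_restrict_iff' measurableSet_Ioi).mpr (ae_of_all _ hdensity_nonneg)),
    integral_Ioi_of_hasDerivAt_of_nonneg' (fun x _ => hderiv x) hdensity_nonneg hlim]
  simp

lemma lt_logb_one_add_mul_div_iff {b t g c d : ℝ} (hb : 1 < b) (hc : 0 < c) (hd : 0 < d)
    (hg : 0 ≤ g) : t < logb b (1 + g * c / d) ↔ (b ^ t - 1) * d / c < g := by
  rw [lt_logb_iff_rpow_lt hb (by positivity), div_lt_iff₀ hc, ← lt_div_iff₀ hd, mul_div_assoc]
  constructor <;> intro h <;> linarith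

lemma ProbabilityTheory.IndepFun.measure_lt_eq_lintegral_map {Ω β : Type*}
    [MeasurableSpace Ω] [MeasurableSpace β] {P : Measure Ω} [IsFiniteMeasure P] {W : Ω → β}
    {G : Ω → ℝ} (hWG : IndepFun W G P) (hW : Measurable W) (hG : Measurable G) {φ : β → ℝ}
    (hφ : Measurable φ) :
    P {ω | φ (W ω) < G ω} = ∫⁻ ω, P.map G (Ioi (φ (W ω))) ∂P := by
  have hA : MeasurableSet {p : β × ℝ | φ p.1 < p.2} :=
    measurableSet_lt (hφ.comp measurable_fst) measurable_snd
  have hsection : Measurable fun w => P.map G (Ioi (φ w)) :=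
    (Antitone.measurable fun _ _ hab => measure_mono (Ioi_subset_Ioi hab)).comp hφ
  calc P {ω | φ (W ω) < G ω}
      = P.map (fun ω => (W ω, G ω)) {p | φ p.1 < p.2} := (Measure.map_apply (hW.prodMk hG) hA).symm
    _ = (P.map W).prod (P.map G) {p | φ p.1 < p.2} := by
      rw [hWG.map_prod_eq_prod_map_map hW.aemeasurable hG.aemeasurable]
    _ = ∫⁻ w, P.map G (Ioi (φ w)) ∂(P.map W) := Measure.prod_apply hA
    _ = ∫⁻ ω, P.map G (Ioi (φ (W ω))) ∂P := lintegral_map hsection hW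

theorem stmt_4_general {Ω : Type*} [MeasurableSpace Ω] (P : Measure Ω) [IsProbabilityMeasure P]
    (G X I R₀ : Ω → ℝ) (hG : Measurable G) (hX : Measurable X) (hI : Measurable I)
    (hR₀ : Measurable R₀)
    (hGnn : ∀ᵐ ω ∂P, 0 ≤ G ω) (hInn : ∀ᵐ ω ∂P, 0 ≤ I ω)
    (hXpos : ∀ᵐ ω ∂P, 0 < X ω) (hR₀pos : ∀ᵐ ω ∂P, 0 < R₀ ω)
    (m : ℕ) (hm : 1 ≤ m)
    (hGlaw : Measure.map G P = gammaMeasure (m : ℝ) (m : ℝ))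
    (hindep : IndepFun G (fun ω => (X ω, I ω, R₀ ω)) P)
    (p₀ σ2 α : ℝ) (K : ℕ) (hp₀ : 0 < p₀) (hσ2 : 0 < σ2) :
    (1 / (K : ENNReal)) *
        ∫⁻ ω, ENNReal.ofReal
          (Real.logb 2 (1 + p₀ * G ω * X ω * R₀ ω ^ (-α) / (I ω + σ2))) ∂P =
      (1 / (K : ENNReal)) *
        ∫⁻ t in Set.Ioi (0 : ℝ),
          ∫⁻ ω, ENNReal.ofReal
            (Real.exp (-((m : ℝ) * ((2 : ℝ) ^ t - 1) * R₀ ω ^ α / (p₀ * X ω)) * (σ2 + I ω)) *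
              ∑ k ∈ Finset.range m,
                ((m : ℝ) * ((2 : ℝ) ^ t - 1) * R₀ ω ^ α / (p₀ * X ω) * (σ2 + I ω)) ^ k /
                  (Nat.factorial k)) ∂P ∂volume := by
  obtain ⟨n, rfl⟩ := Nat.exists_eq_add_of_le' hm
  set W : Ω → ℝ × ℝ × ℝ := fun ω => (X ω, I ω, R₀ ω)
  set threshold : ℝ → ℝ × ℝ × ℝ → ℝ :=
    fun t w => ((2 : ℝ) ^ t - 1) * (w.2.2 ^ α * (w.2.1 + σ2)) / (p₀ * w.1)
  have hrate_nonneg : 0 ≤ᵐ[P] fun ω => logb 2 (1 + p₀ * G ω * X ω * R₀ ω ^ (-α) / (I ω + σ2)) := by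
    filter_upwards [hGnn, hInn, hXpos, hR₀pos] with ω hG hI hX hR
    exact logb_nonneg one_lt_two (le_add_of_nonneg_right (by positivity))
  have hevent (t : ℝ) : {ω | t < logb 2 (1 + p₀ * G ω * X ω * R₀ ω ^ (-α) / (I ω + σ2))}
      =ᵐ[P] {ω | threshold t (W ω) < G ω} := by
    refine eventuallyEq_set.mpr ?_
    filter_upwards [hGnn, hInn, hXpos, hR₀pos] with ω hG hI hX hR
    have hsinr : p₀ * G ω * X ω * R₀ ω ^ (-α) / (I ω + σ2)
        = G ω * (p₀ * X ω) / (R₀ ω ^ α * (I ω + σ2)) := by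
      rw [rpow_neg hR.le]
      field_simp
    rw [hsinr]
    exact lt_logb_one_add_mul_div_iff one_lt_two (by positivity) (by positivity) hG
  congr 1
  rw [lintegral_eq_lintegral_meas_lt P hrate_nonneg (by unfold logb; fun_prop)]
  refine setLIntegral_congr_fun measurableSet_Ioi fun t ht => ?_
  rw [measure_congr (hevent t),
    hindep.symm.measure_lt_eq_lintegral_map (by fun_prop) hG (by fun_prop), hGlaw]
  refine lintegral_congr_ae ?_
  filter_upwards [hInn, hXpos, hR₀pos] with ω hI hX hR
  have h2t : 0 ≤ (2 : ℝ) ^ t - 1 := sub_nonneg.mpr (one_le_rpow one_le_two (le_of_lt ht))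
  rw [gammaMeasure_Ioi_eq_erlangTail n (by positivity) (by simp only [threshold, W]; positivity)]
  have hS : ((n + 1 : ℕ) : ℝ) * threshold t (W ω)
      = ((n + 1 : ℕ) : ℝ) * ((2 : ℝ) ^ t - 1) * R₀ ω ^ α / (p₀ * X ω) * (σ2 + I ω) := by
    simp only [threshold, W]
    ring
  rw [hS, erlangTail, neg_mul]

/-- Probabilistic core of Theorem 2 (average achievable rate): identity in `[0,∞]`
between `(1/K) E[log₂(1 + SINR)]` and the integral over `t ∈ (0,∞)` of the expectation
of the truncated exponential sum evaluated at `S_t = m (2^t - 1) R₀^α / (p₀ X)`. -/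
theorem stmt_4 {Ω : Type*} [MeasurableSpace Ω] (P : Measure Ω) [IsProbabilityMeasure P]
    (G X I R₀ : Ω → ℝ) (hG : Measurable G) (hX : Measurable X) (hI : Measurable I)
    (hR₀ : Measurable R₀)
    (hGnn : ∀ᵐ ω ∂P, 0 ≤ G ω) (hInn : ∀ᵐ ω ∂P, 0 ≤ I ω)
    (hXpos : ∀ᵐ ω ∂P, 0 < X ω) (hR₀pos : ∀ᵐ ω ∂P, 0 < R₀ ω)
    (m : ℕ) (hm : 1 ≤ m)
    (hGlaw : Measure.map G P = gammaMeasure (m : ℝ) (m : ℝ))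
    (hindep : IndepFun G (fun ω => (X ω, I ω, R₀ ω)) P)
    (p₀ σ2 α : ℝ) (K : ℕ) (hp₀ : 0 < p₀) (hσ2 : 0 < σ2) (hα : 0 < α) (hK : 1 ≤ K) :
    (1 / (K : ENNReal)) *
        ∫⁻ ω, ENNReal.ofReal
          (Real.logb 2 (1 + p₀ * G ω * X ω * R₀ ω ^ (-α) / (I ω + σ2))) ∂P =
      (1 / (K : ENNReal)) *
        ∫⁻ t in Set.Ioi (0 : ℝ),
          ∫⁻ ω, ENNReal.ofReal
            (Real.exp (-((m : ℝ) * ((2 : ℝ) ^ t - 1) * R₀ ω ^ α / (p₀ * X ω)) * (σ2 + I ω)) *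
              ∑ k ∈ Finset.range m,
                ((m : ℝ) * ((2 : ℝ) ^ t - 1) * R₀ ω ^ α / (p₀ * X ω) * (σ2 + I ω)) ^ k /
                  (Nat.factorial k)) ∂P ∂volume :=
  stmt_4_general P G X I R₀ hG hX hI hR₀ hGnn hInn hXpos hR₀pos m hm hGlaw hindep p₀ σ2 α K hp₀ hσ2
end
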